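/- In the setting of a (P2+P3, complement-of-(P2+P3))-free graph G with induced 5-cycle C on v1,...,v5, for every i in {1,...,5} the edges between V_{i,i+2} and V_{i+1,i+3} form a co-matching: every vertex of V_{i,i+2} has at most one non-neighbour in V_{i+1,i+3}, and every vertex of V_{i+1,i+3} has at most one non-neighbour in V_{i,i+2}. -/

import Mathlib

/-! The two halves are one configuration lemma. Let `x` be adjacent to two non-adjacent vertices
`a`, `b`, and let `y ≠ y'` be non-neighbours of `x` that are adjacent to a vertex `c` and not to
`a`, `b`. If `y ~ y'`, then `y y'` together with `a x b` is an induced `P₂ + P₃`; otherwise so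
is `x a` together with `y c y'`. For `x ∈ V_{i,i+2}` take `(a, b, c) = (vᵢ, vᵢ₊₂, vᵢ₊₃)`,
and for `x ∈ V_{i+1,i+3}` take `(a, b, c) = (vᵢ₊₃, vᵢ₊₁, vᵢ)`. -/

/-- `G` contains no induced subgraph isomorphic to `H`. -/
def InducedFree {α V : Type*} (G : SimpleGraph V) (H : SimpleGraph α) : Prop :=
  ∀ f : α ↪ V, ¬ (∀ a b : α, H.Adj a b ↔ G.Adj (f a) (f b))

/-- `P₂ + P₃`: the disjoint union of a 2-vertex path and a 3-vertex path. -/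
def P2PlusP3 : SimpleGraph (Fin 5) :=
  SimpleGraph.fromRel fun a b => (a = 0 ∧ b = 1) ∨ (a = 2 ∧ b = 3) ∨ (a = 3 ∧ b = 4)

/-- `VS G v S`: the vertices outside the 5-cycle `v 0, …, v 4` whose
neighbourhood on the cycle is exactly `{v i : i ∈ S}`. -/
def VS {V : Type*} (G : SimpleGraph V) (v : ZMod 5 → V) (S : Set (ZMod 5)) : Set V :=
  {x | (∀ i, x ≠ v i) ∧ ∀ i, G.Adj x (v i) ↔ i ∈ S}

section

variable {V : Type*} {G : SimpleGraph V}

theorem InducedFree.false_of_p2PlusP3 (hG : InducedFree G P2PlusP3) {a b c d e : V}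
    (hab : G.Adj a b) (hcd : G.Adj c d) (hde : G.Adj d e) (hce : c ≠ e) (hce' : ¬ G.Adj c e)
    (hac : ¬ G.Adj a c) (had : ¬ G.Adj a d) (hae : ¬ G.Adj a e)
    (hbc : ¬ G.Adj b c) (hbd : ¬ G.Adj b d) (hbe : ¬ G.Adj b e) : False := by
  have hadj : ∀ p q, P2PlusP3.Adj p q ↔ G.Adj (![a, b, c, d, e] p) (![a, b, c, d, e] q) := by
    intro p q
    fin_cases p <;> fin_cases q <;> simp [P2PlusP3, *, G.adj_comm]
  refine hG ⟨![a, b, c, d, e], fun p q h => ?_⟩ hadj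
  fin_cases p <;> fin_cases q <;> simp_all [G.adj_comm]

theorem InducedFree.eq_of_p2PlusP3 (hG : InducedFree G P2PlusP3) {a b c x y y' : V}
    (hab : a ≠ b) (hab' : ¬ G.Adj a b) (hac : ¬ G.Adj a c)
    (hxa : G.Adj x a) (hxb : G.Adj x b) (hxc : ¬ G.Adj x c)
    (hyc : G.Adj y c) (hya : ¬ G.Adj y a) (hyb : ¬ G.Adj y b)
    (hy'c : G.Adj y' c) (hy'a : ¬ G.Adj y' a) (hy'b : ¬ G.Adj y' b)
    (hxy : ¬ G.Adj x y) (hxy' : ¬ G.Adj x y') : y = y' := by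
  by_contra hne
  by_cases hyy' : G.Adj y y'
  · exact hG.false_of_p2PlusP3 hyy' hxa.symm hxb hab hab' hya (mt G.adj_symm hxy) hyb hy'a
      (mt G.adj_symm hxy') hy'b
  · exact hG.false_of_p2PlusP3 hxa hyc hy'c.symm hne hyy' hxy hxc hxy' (mt G.adj_symm hya)
      hac (mt G.adj_symm hy'a)

theorem adj_of_mem_VS {v : ZMod 5 → V} {S : Set (ZMod 5)} {x : V} (hx : x ∈ VS G v S)
    {i : ZMod 5} (hi : i ∈ S) : G.Adj x (v i) :=
  (hx.2 i).2 hi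

theorem not_adj_of_mem_VS {v : ZMod 5 → V} {S : Set (ZMod 5)} {x : V} (hx : x ∈ VS G v S)
    {i : ZMod 5} (hi : i ∉ S) : ¬ G.Adj x (v i) :=
  mt (hx.2 i).1 hi

end

theorem stmt_17_general {V : Type*} (G : SimpleGraph V)
    (hG : InducedFree G P2PlusP3)
    (v : ZMod 5 → V) (hv : Function.Injective v)
    (hC : ∀ i j : ZMod 5, G.Adj (v i) (v j) ↔ j = i + 1 ∨ j = i - 1) :
    ∀ i : ZMod 5,
      (∀ x ∈ VS G v {i, i + 2}, ∀ y ∈ VS G v {i + 1, i + 3},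
        ∀ y' ∈ VS G v {i + 1, i + 3}, ¬ G.Adj x y → ¬ G.Adj x y' → y = y') ∧
      (∀ y ∈ VS G v {i + 1, i + 3}, ∀ x ∈ VS G v {i, i + 2},
        ∀ x' ∈ VS G v {i, i + 2}, ¬ G.Adj y x → ¬ G.Adj y x' → x = x') := by
  intro i
  have nonadj : ∀ j k : ZMod 5, ¬ (k = j + 1 ∨ k = j - 1) → ¬ G.Adj (v j) (v k) :=
    fun j k hjk h => hjk ((hC j k).1 h)
  constructor
  · intro x hx y hy y' hy' hxy hxy'
    exact hG.eq_of_p2PlusP3 (a := v i) (b := v (i + 2)) (c := v (i + 3))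
      (hv.ne (by grind)) (nonadj _ _ (by grind)) (nonadj _ _ (by grind))
      (adj_of_mem_VS hx (by simp)) (adj_of_mem_VS hx (by simp))
      (not_adj_of_mem_VS hx (by grind)) (adj_of_mem_VS hy (by simp))
      (not_adj_of_mem_VS hy (by grind)) (not_adj_of_mem_VS hy (by grind))
      (adj_of_mem_VS hy' (by simp)) (not_adj_of_mem_VS hy' (by grind))
      (not_adj_of_mem_VS hy' (by grind)) hxy hxy'
  · intro y hy x hx x' hx' hyx hyx'
    exact hG.eq_of_p2PlusP3 (a := v (i + 3)) (b := v (i + 1)) (c := v i)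
      (hv.ne (by grind)) (nonadj _ _ (by grind)) (nonadj _ _ (by grind))
      (adj_of_mem_VS hy (by simp)) (adj_of_mem_VS hy (by simp))
      (not_adj_of_mem_VS hy (by grind)) (adj_of_mem_VS hx (by simp))
      (not_adj_of_mem_VS hx (by grind)) (not_adj_of_mem_VS hx (by grind))
      (adj_of_mem_VS hx' (by simp)) (not_adj_of_mem_VS hx' (by grind))
      (not_adj_of_mem_VS hx' (by grind)) hyx hyx'

/-- For each `i`, the edges between `V_{i,i+2}` and `V_{i+1,i+3}` form a
co-matching: each vertex of one set has at most one non-neighbour in the other. -/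
theorem stmt_17 {V : Type*} [Fintype V] (G : SimpleGraph V)
    (hG : InducedFree G P2PlusP3) (hGc : InducedFree Gᶜ P2PlusP3)
    (v : ZMod 5 → V) (hv : Function.Injective v)
    (hC : ∀ i j : ZMod 5, G.Adj (v i) (v j) ↔ j = i + 1 ∨ j = i - 1) :
    ∀ i : ZMod 5,
      (∀ x ∈ VS G v {i, i + 2}, ∀ y ∈ VS G v {i + 1, i + 3},
        ∀ y' ∈ VS G v {i + 1, i + 3}, ¬ G.Adj x y → ¬ G.Adj x y' → y = y') ∧
      (∀ y ∈ VS G v {i + 1, i + 3}, ∀ x ∈ VS G v {i, i + 2},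
        ∀ x' ∈ VS G v {i, i + 2}, ¬ G.Adj y x → ¬ G.Adj y x' → x = x') :=
  stmt_17_general G hG v hv hC
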